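/- Strict convexity of the disutility along each coordinate: assume θ_D + θ_E > 0. Then for every index j and every α ∈ S₀, the one-variable function t ↦ U(α with its j-th coordinate replaced by t) is strictly convex on the interval {t ∈ ℝ : the updated vector lies in S₀}. -/

import Mathlib

open Finset

noncomputable section

/-- Total offloading fraction `s(α) = Σ_j α_j`. -/
def sTot {N : ℕ} (α : Fin N → ℝ) : ℝ := ∑ j, α j

/-- Local computing delay contribution. -/
def Gfun {N : ℕ} (lam c f : ℝ) (α : Fin N → ℝ) : ℝ :=
  (1 - sTot α) * c / (f - (1 - sTot α) * lam * c)

/-- Wireless transmission delay contribution. -/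
def Hfun {N : ℕ} (lam z r Sbar : ℝ) (α : Fin N → ℝ) : ℝ :=
  sTot α * (lam * Sbar * sTot α / (2 * (1 - lam * z * sTot α / r)) + z / r)

/-- Expected total delay. -/
def Dfun {N : ℕ} (Nc : ℕ) (lam c z r f Sbar : ℝ) (fOSP w K : Fin N → ℝ)
    (α : Fin N → ℝ) : ℝ :=
  Gfun lam c f α + Hfun lam z r Sbar α + (∑ j, α j * w j) +
    (∑ j ∈ Finset.univ.filter (fun j : Fin N => (j : ℕ) < Nc), α j * c / fOSP j) +
    (∑ j ∈ Finset.univ.filter (fun j : Fin N => Nc ≤ (j : ℕ)),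
      α j * c / (fOSP j - K j - α j * lam * c))

/-- Expected energy consumption. -/
def Efun {N : ℕ} (lam c z r f Sbar εloc εtx : ℝ) (α : Fin N → ℝ) : ℝ :=
  εloc * Gfun lam c f α + εtx * Hfun lam z r Sbar α

/-- Expected payment. -/
def Pfun {N : ℕ} (lam c : ℝ) (price : Fin N → ℝ) (α : Fin N → ℝ) : ℝ :=
  ∑ j, α j * price j * c * lam

/-- Basic feasible set `S₀`. -/
def S0 {N : ℕ} (Nc : ℕ) (lam c z r f : ℝ) (fOSP K : Fin N → ℝ) :
    Set (Fin N → ℝ) :=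
  {α | (∀ j, 0 ≤ α j) ∧ sTot α ≤ 1 ∧ (1 - sTot α) * lam * c < f ∧
    lam * z * sTot α < r ∧ ∀ j : Fin N, Nc ≤ (j : ℕ) → K j + α j * lam * c < fOSP j}

/-- The disutility function `U`. -/
def Ufun {N : ℕ} (Nc : ℕ) (lam c z r f Sbar εloc εtx : ℝ) (fOSP w K price : Fin N → ℝ)
    (θD θE θP DMAX EMAX PMAX : ℝ) (α : Fin N → ℝ) : ℝ :=
  θD * Dfun Nc lam c z r f Sbar fOSP w K α / DMAX +
    θE * Efun lam c z r f Sbar εloc εtx α / EMAX +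
    θP * Pfun lam c price α / PMAX

/-! Along a coordinate line `t ↦ update α j t` the total fraction `s` moves with slope one, so the
local term `G`, a positive multiple of `1 / (f - (1 - s) λ c)` up to a constant, is strictly convex
in `t`. All other terms are convex: reciprocals and `s² / ·` of positive affine functions, or linear
ones. Since `G` enters `U` with weight `θ_D / D_MAX + θ_E ε_loc / E_MAX > 0`, `U` is strictly convex
along the line. -/

open Function Set

theorem StrictConvexOn.const_mul {E : Type*} [AddCommMonoid E] [Module ℝ E] {s : Set E}
    {f : E → ℝ} {c : ℝ} (hc : 0 < c) (hf : StrictConvexOn ℝ s f) :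
    StrictConvexOn ℝ s fun x => c * f x :=
  ⟨hf.1, fun x hx y hy hxy a b ha hb hab => by
    simpa only [smul_eq_mul, mul_add, mul_left_comm c] using
      mul_lt_mul_of_pos_left (hf.2 hx hy hxy ha hb hab) hc⟩

theorem StrictConvexOn.comp_mul_add {s : Set ℝ} {f : ℝ → ℝ} (hf : StrictConvexOn ℝ s f)
    {a : ℝ} (ha : a ≠ 0) (b : ℝ) :
    StrictConvexOn ℝ ((fun x => a * x + b) ⁻¹' s) fun x => f (a * x + b) := by
  have hcombo : ∀ {x y u v : ℝ}, u + v = 1 →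
      a * (u • x + v • y) + b = u • (a * x + b) + v • (a * y + b) := fun huv => by
    simp only [smul_eq_mul]; linear_combination (-b) * huv
  refine ⟨fun x hx y hy u v hu hv huv => ?_, fun x hx y hy hxy u v hu hv huv => ?_⟩
  · simpa only [Set.mem_preimage, hcombo huv] using hf.1 hx hy hu hv huv
  · simpa only [hcombo huv] using
      hf.2 hx hy (fun h => hxy (mul_left_cancel₀ ha (add_right_cancel h))) hu hv huv

theorem strictConvexOn_inv_mul_add {p : ℝ} (hp : p ≠ 0) (q : ℝ) :
    StrictConvexOn ℝ {x | 0 < p * x + q} fun x => (p * x + q)⁻¹ := by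
  have h := (strictConvexOn_zpow (m := -1) (by decide) (by decide)).comp_mul_add hp q
  simp only [zpow_neg_one] at h
  exact h

theorem strictConvexOn_mul_div_sub_mul {a l c : ℝ} (ha : 0 < a) (hl : 0 < l) (hc : c ≠ 0) :
    StrictConvexOn ℝ {x | x * l * c < a} fun x => x * c / (a - x * l * c) := by
  have hlc : -(l * c) ≠ 0 := neg_ne_zero.mpr (mul_ne_zero hl.ne' hc)
  have h := ((strictConvexOn_inv_mul_add hlc a).const_mul (div_pos ha hl)).add_const (-l⁻¹)
  have hset : {x | 0 < -(l * c) * x + a} = {x : ℝ | x * l * c < a} :=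
    Set.ext fun x => show 0 < -(l * c) * x + a ↔ x * l * c < a by
      constructor <;> intro h <;> linarith
  rw [hset] at h
  refine h.congr fun x hx => ?_
  have hx : a - x * l * c ≠ 0 := (sub_pos.mpr hx).ne'
  rw [Pi.add_apply, show -(l * c) * x + a = a - x * l * c by ring, eq_div_iff hx, add_mul,
    mul_assoc, inv_mul_cancel₀ hx]
  field_simp
  ring

theorem convexOn_mul_add {s : Set ℝ} (hs : Convex ℝ s) (m b : ℝ) :
    ConvexOn ℝ s fun x => m * x + b :=
  ((LinearMap.mulLeft ℝ m).convexOn hs).add_const b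

theorem convexOn_sq_div_sub_mul {p : ℝ} (hp : p ≠ 0) (q : ℝ) :
    ConvexOn ℝ {x | p * x < q} fun x => x ^ 2 / (q - p * x) := by
  have hinv := strictConvexOn_inv_mul_add (neg_ne_zero.mpr hp) q
  have h := (hinv.convexOn.smul (sq_nonneg (q / p))).add
    (convexOn_mul_add hinv.1 (-p⁻¹) (-(q / p ^ 2)))
  have hset : {x | 0 < -p * x + q} = {x : ℝ | p * x < q} :=
    Set.ext fun x => show 0 < -p * x + q ↔ p * x < q by constructor <;> intro h <;> linarith
  rw [hset] at h
  refine h.congr fun x hx => ?_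
  have hx : q - p * x ≠ 0 := (sub_pos.mpr hx).ne'
  rw [Pi.add_apply, smul_eq_mul, show -p * x + q = q - p * x by ring, eq_div_iff hx, add_mul,
    mul_assoc, inv_mul_cancel₀ hx]
  field_simp
  ring

theorem strictConvexOn_mul_add_mul {E : Type*} [AddCommMonoid E] [Module ℝ E] {s : Set E}
    {f g : E → ℝ} {a b : ℝ} (hf : StrictConvexOn ℝ s f) (hg : StrictConvexOn ℝ s g)
    (ha : 0 ≤ a) (hb : 0 ≤ b) (hab : 0 < a ∨ 0 < b) :
    StrictConvexOn ℝ s fun x => a * f x + b * g x := by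
  rcases hab with ha' | hb'
  · exact (hf.const_mul ha').add_convexOn (hg.convexOn.smul hb)
  · exact (hf.convexOn.smul ha).add_strictConvexOn (hg.const_mul hb')

theorem Convex.preimage_update {ι : Type*} [DecidableEq ι] {s : Set (ι → ℝ)}
    (hs : Convex ℝ s) (x : ι → ℝ) (j : ι) : Convex ℝ {t | update x j t ∈ s} := by
  intro t ht u hu a b ha hb hab
  have hcombo : update x j (a • t + b • u) = a • update x j t + b • update x j u := by
    ext i
    rcases eq_or_ne i j with rfl | hij
    · simp
    · simp [hij, ← add_mul, hab]
  simpa only [Set.mem_ofPred_eq, hcombo] using hs ht hu ha hb hab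

theorem convexOn_sum_update {ι : Type*} [DecidableEq ι] {s : Set ℝ} (hs : Convex ℝ s)
    (I : Finset ι) (g : ι → ℝ → ℝ) (x : ι → ℝ) (j : ι) (hg : j ∈ I → ConvexOn ℝ s (g j)) :
    ConvexOn ℝ s fun t => ∑ i ∈ I, g i (update x j t i) := by
  by_cases hj : j ∈ I
  · refine ((hg hj).add_const (∑ i ∈ I.erase j, g i (x i))).congr fun t _ => ?_
    rw [← Finset.add_sum_erase I _ hj, update_self]
    exact congrArg _ <| Finset.sum_congr rfl fun i hi => by
      rw [update_of_ne (Finset.ne_of_mem_erase hi)]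
  · refine (convexOn_const (∑ i ∈ I, g i (x i)) hs).congr fun t _ =>
      Finset.sum_congr rfl fun i hi => ?_
    rw [update_of_ne (ne_of_mem_of_not_mem hi hj)]

theorem sTot_update {N : ℕ} (α : Fin N → ℝ) (j : Fin N) (t : ℝ) :
    sTot (update α j t) = t + (sTot α - α j) := by
  simp only [sTot]
  rw [Finset.sum_update_of_mem (Finset.mem_univ j), ← Finset.sum_erase_eq_sub (Finset.mem_univ j),
    Finset.sdiff_singleton_eq_erase]

theorem convex_S0 {N : ℕ} (Nc : ℕ) (lam c z r f : ℝ) (fOSP K : Fin N → ℝ) :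
    Convex ℝ (S0 Nc lam c z r f fOSP K) := by
  rintro x ⟨hx0, hx1, hxG, hxH, hxK⟩ y ⟨hy0, hy1, hyG, hyH, hyK⟩ a b ha hb hab
  have hs : sTot (a • x + b • y) = a * sTot x + b * sTot y := by
    simp [sTot, Finset.sum_add_distrib, Finset.mul_sum]
  have hlt : ∀ {X Y M : ℝ}, X < M → Y < M → a * X + b * Y < M := fun {_ _ M} hX hY =>
    (convex_Iio M : Convex ℝ (Iio M)) hX hY ha hb hab
  refine ⟨fun i => ?_, ?_, ?_, ?_, fun i hi => ?_⟩
  · exact (convex_Ici 0 : Convex ℝ (Ici (0 : ℝ))) (hx0 i) (hy0 i) ha hb hab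
  · rw [hs]
    exact (convex_Iic 1 : Convex ℝ (Iic (1 : ℝ))) hx1 hy1 ha hb hab
  · rw [hs]
    linear_combination hlt hxG hyG - lam * c * hab
  · rw [hs]
    linear_combination hlt hxH hyH
  · simp only [Pi.add_apply, Pi.smul_apply, smul_eq_mul]
    linear_combination hlt (hxK i hi) (hyK i hi) - K i * hab

section Model

variable {N Nc : ℕ} {lam c z r f Sbar : ℝ} {fOSP K : Fin N → ℝ}

theorem Hfun_eq (hr : r ≠ 0) (α : Fin N → ℝ) :
    Hfun lam z r Sbar α =
      lam * Sbar * r / 2 * (sTot α ^ 2 / (r - lam * z * sTot α)) + z / r * sTot α := by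
  rw [Hfun, one_sub_div hr, ← mul_div_assoc, div_div_eq_mul_div, div_mul_eq_div_div_swap]
  ring

theorem strictConvexOn_Gfun_update (hf : 0 < f) (hlam : 0 < lam) (hc : c ≠ 0)
    (α : Fin N → ℝ) (j : Fin N) :
    StrictConvexOn ℝ {t | (1 - sTot (update α j t)) * lam * c < f}
      fun t => Gfun lam c f (update α j t) := by
  have h := (strictConvexOn_mul_div_sub_mul hf hlam hc).comp_mul_add
    (neg_ne_zero.mpr one_ne_zero) (1 - (sTot α - α j))
  have hline : ∀ t, -1 * t + (1 - (sTot α - α j)) = 1 - sTot (update α j t) := fun t => by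
    rw [sTot_update]; ring
  simp only [Set.preimage_ofPred_eq, hline] at h
  exact h

theorem convexOn_Hfun_update (hlam : 0 < lam) (hz : 0 < z) (hr : 0 < r) (hSbar : 0 ≤ Sbar)
    (α : Fin N → ℝ) (j : Fin N) :
    ConvexOn ℝ {t | lam * z * sTot (update α j t) < r}
      fun t => Hfun lam z r Sbar (update α j t) := by
  have hsq := convexOn_sq_div_sub_mul (mul_pos hlam hz).ne' r
  have h := ((hsq.smul (by positivity : 0 ≤ lam * Sbar * r / 2)).add
    (convexOn_mul_add hsq.1 (z / r) 0)).translate_right (sTot α - α j)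
  have hline : ∀ t, sTot α - α j + t = sTot (update α j t) := fun t => by
    rw [sTot_update, add_comm]
  simp only [Set.preimage_ofPred_eq, comp_def, Pi.add_apply, smul_eq_mul, add_zero, hline] at h
  simpa only [Hfun_eq hr.ne'] using h

theorem strictConvexOn_Dfun_update (hlam : 0 < lam) (hc : 0 < c) (hz : 0 < z) (hr : 0 < r)
    (hf : 0 < f) (hSbar : 0 ≤ Sbar) (hK : ∀ i : Fin N, Nc ≤ (i : ℕ) → K i < fOSP i)
    (w : Fin N → ℝ) (α : Fin N → ℝ) (j : Fin N) :
    StrictConvexOn ℝ {t | update α j t ∈ S0 Nc lam c z r f fOSP K}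
      fun t => Dfun Nc lam c z r f Sbar fOSP w K (update α j t) := by
  have hS := (convex_S0 Nc lam c z r f fOSP K).preimage_update α j
  have hG := (strictConvexOn_Gfun_update hf hlam hc.ne' α j).subset (fun t ht => ht.2.2.1) hS
  have hH := (convexOn_Hfun_update hlam hz hr hSbar α j).subset (fun t ht => ht.2.2.2.1) hS
  have hW := convexOn_sum_update hS univ (fun i x => x * w i) α j fun _ =>
    (convexOn_mul_add hS (w j) 0).congr fun x _ => by ring
  have hCloud := convexOn_sum_update hS (univ.filter fun i : Fin N => (i : ℕ) < Nc)
    (fun i x => x * c / fOSP i) α j fun _ =>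
    (convexOn_mul_add hS (c / fOSP j) 0).congr fun x _ => by ring
  have hEdge := convexOn_sum_update hS (univ.filter fun i : Fin N => Nc ≤ (i : ℕ))
    (fun i x => x * c / (fOSP i - K i - x * lam * c)) α j fun hj =>
    (strictConvexOn_mul_div_sub_mul (sub_pos.mpr (hK j (mem_filter.mp hj).2)) hlam
      hc.ne').convexOn.subset (fun t ht => by
        have := ht.2.2.2.2 j (mem_filter.mp hj).2
        rw [update_self] at this
        exact lt_sub_iff_add_lt'.mpr this) hS
  exact (((hG.add_convexOn hH).add_convexOn hW).add_convexOn hCloud).add_convexOn hEdge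

theorem strictConvexOn_Efun_update {εloc εtx : ℝ} (hlam : 0 < lam) (hc : 0 < c) (hz : 0 < z)
    (hr : 0 < r) (hf : 0 < f) (hSbar : 0 ≤ Sbar) (hεloc : 0 < εloc) (hεtx : 0 ≤ εtx)
    (α : Fin N → ℝ) (j : Fin N) :
    StrictConvexOn ℝ {t | update α j t ∈ S0 Nc lam c z r f fOSP K}
      fun t => Efun lam c z r f Sbar εloc εtx (update α j t) := by
  have hS := (convex_S0 Nc lam c z r f fOSP K).preimage_update α j
  have hG := (strictConvexOn_Gfun_update hf hlam hc.ne' α j).subset (fun t ht => ht.2.2.1) hS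
  have hH := (convexOn_Hfun_update hlam hz hr hSbar α j).subset (fun t ht => ht.2.2.2.1) hS
  exact (hG.const_mul hεloc).add_convexOn (hH.smul hεtx)

theorem convexOn_Pfun_update {s : Set ℝ} (hs : Convex ℝ s) (lam c : ℝ) (price : Fin N → ℝ)
    (α : Fin N → ℝ) (j : Fin N) : ConvexOn ℝ s fun t => Pfun lam c price (update α j t) :=
  convexOn_sum_update hs univ (fun i x => x * price i * c * lam) α j fun _ =>
    (convexOn_mul_add hs (price j * c * lam) 0).congr fun x _ => by ring

end Model

theorem disutility_strictConvexOn_coord_general (N Nc : ℕ)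
    (lam c z r f Sbar : ℝ) (hlam : 0 < lam) (hc : 0 < c) (hz : 0 < z) (hr : 0 < r)
    (hf : 0 < f) (hSbar : 0 < Sbar)
    (εloc εtx : ℝ) (hεloc : 0 < εloc) (hεtx : 0 < εtx)
    (fOSP w K price : Fin N → ℝ)
    (hK : ∀ j : Fin N, Nc ≤ (j : ℕ) → 0 ≤ K j ∧ K j < fOSP j)
    (θD θE θP : ℝ) (hθD : 0 ≤ θD) (hθE : 0 ≤ θE) (hθP : 0 ≤ θP)
    (hθDE : 0 < θD + θE)
    (DMAX EMAX PMAX : ℝ) (hDMAX : 0 < DMAX) (hEMAX : 0 < EMAX) (hPMAX : 0 < PMAX) :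
    ∀ j : Fin N, ∀ α ∈ S0 Nc lam c z r f fOSP K,
      StrictConvexOn ℝ {t : ℝ | Function.update α j t ∈ S0 Nc lam c z r f fOSP K}
        (fun t : ℝ =>
          Ufun Nc lam c z r f Sbar εloc εtx fOSP w K price θD θE θP DMAX EMAX PMAX
            (Function.update α j t)) := by
  intro j α _
  have hD := strictConvexOn_Dfun_update hlam hc hz hr hf hSbar.le (fun i hi => (hK i hi).2) w α j
  have hE := strictConvexOn_Efun_update (fOSP := fOSP) (K := K) (Nc := Nc) hlam hc hz hr hf
    hSbar.le hεloc hεtx.le α j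
  have hP := convexOn_Pfun_update hD.1 lam c price α j
  have hweight : 0 < θD / DMAX ∨ 0 < θE / EMAX := by
    rcases hθD.eq_or_lt with rfl | hθD'
    · exact Or.inr (div_pos (by linarith) hEMAX)
    · exact Or.inl (div_pos hθD' hDMAX)
  refine ((strictConvexOn_mul_add_mul hD hE (div_nonneg hθD hDMAX.le) (div_nonneg hθE hEMAX.le)
    hweight).add_convexOn (hP.smul (div_nonneg hθP hPMAX.le))).congr fun t _ => ?_
  simp only [Ufun, Pi.add_apply, smul_eq_mul]
  ring

/-- Strict convexity of the disutility along each coordinate: if `θ_D + θ_E > 0`,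
then for every index `j` and every `α ∈ S₀`, `t ↦ U(α with j-th coordinate replaced
by t)` is strictly convex on `{t | Function.update α j t ∈ S₀}`. -/
theorem disutility_strictConvexOn_coord (N Nc : ℕ) (hN : 1 ≤ N) (hNc : Nc ≤ N)
    (lam c z r f Sbar : ℝ) (hlam : 0 < lam) (hc : 0 < c) (hz : 0 < z) (hr : 0 < r)
    (hf : 0 < f) (hSbar : 0 < Sbar)
    (εloc εtx : ℝ) (hεloc : 0 < εloc) (hεtx : 0 < εtx)
    (fOSP w K price : Fin N → ℝ)
    (hfOSP : ∀ j, 0 < fOSP j) (hw : ∀ j, 0 ≤ w j) (hprice : ∀ j, 0 ≤ price j)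
    (hK : ∀ j : Fin N, Nc ≤ (j : ℕ) → 0 ≤ K j ∧ K j < fOSP j)
    (θD θE θP : ℝ) (hθD : 0 ≤ θD) (hθE : 0 ≤ θE) (hθP : 0 ≤ θP)
    (hθDE : 0 < θD + θE)
    (DMAX EMAX PMAX : ℝ) (hDMAX : 0 < DMAX) (hEMAX : 0 < EMAX) (hPMAX : 0 < PMAX) :
    ∀ j : Fin N, ∀ α ∈ S0 Nc lam c z r f fOSP K,
      StrictConvexOn ℝ {t : ℝ | Function.update α j t ∈ S0 Nc lam c z r f fOSP K}
        (fun t : ℝ =>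
          Ufun Nc lam c z r f Sbar εloc εtx fOSP w K price θD θE θP DMAX EMAX PMAX
            (Function.update α j t)) :=
  disutility_strictConvexOn_coord_general N Nc lam c z r f Sbar hlam hc hz hr hf hSbar εloc εtx
    hεloc hεtx fOSP w K price hK θD θE θP hθD hθE hθP hθDE DMAX EMAX PMAX hDMAX hEMAX hPMAX

end
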